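/- arXiv:1903.02668 — 6 statements merged into one kernel-verified Lean document; each statement's English description precedes it below -/
import Mathlib

section
/- The classical Hasse square is both a pullback and a pushout: the sequence of abelian groups 0 → ℤ → ℚ × ∏_p ℤ_p → ℚ ⊗_ℤ (∏_p ℤ_p) → 0 is exact, where the product is over all prime numbers p, ℤ_p denotes the ring of p-adic integers, the first map sends n to (n, (n)_p), and the second map sends (q, (a_p)) to q ⊗ 1 − ι((a_p)), with ι : ∏_p ℤ_p → ℚ ⊗_ℤ ∏_p ℤ_p the canonical map a ↦ 1 ⊗ a. -/
open scoped TensorProduct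

/-- The product of the rings of `p`-adic integers over all primes `p`. -/
abbrev HasseProd : Type := ∀ p : Nat.Primes, @PadicInt p.1 ⟨p.2⟩

/-- First map of the Hasse square sequence: `n ↦ ((n : ℚ), (n)_p)`. -/
noncomputable def hasseF : ℤ → ℚ × HasseProd :=
  fun n => ((n : ℚ), fun _ => (n : _))

/-- Second map of the Hasse square sequence: `(q, a) ↦ q ⊗ 1 - 1 ⊗ a`. -/
noncomputable def hasseG : ℚ × HasseProd → ℚ ⊗[ℤ] HasseProd :=
  fun x => x.1 ⊗ₜ[ℤ] (1 : HasseProd) - (1 : ℚ) ⊗ₜ[ℤ] x.2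

/-! For a torsion-free ring `R`, `q ⊗ 1 = 1 ⊗ a` in `ℚ ⊗ R` iff `q.den * a = q.num` in `R`, so
exactness in the middle amounts to `ℤ` being saturated in `R = ∏ ℤ_p`: an integer divisible by `d`
in every `ℤ_p` is divisible by `d` in `ℤ`. Surjectivity amounts to `ℤ` being dense in
`∏ ℤ_p`, i.e. `ℤ → ∏ ℤ_p / n` onto for `n ≠ 0`: writing `b = m + q.den * c`, one has
`q ⊗ b = (q m) ⊗ 1 + 1 ⊗ (q.num c)`. Density holds at prime powers by `p`-adic approximation
(`p ^ k` is a unit in `ℤ_ℓ` for `ℓ ≠ p`) and passes to coprime products by Bézout. -/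

open TensorProduct

theorem Rat.one_tmul_injective {M : Type*} [AddCommGroup M] [IsAddTorsionFree M] :
    Function.Injective ((1 : ℚ) ⊗ₜ[ℤ] · : M → ℚ ⊗[ℤ] M) :=
  (IsLocalizedModule.injective_iff_isRegular (nonZeroDivisors ℤ) (mk ℤ ℚ M 1)).mpr fun c =>
    (isRegular_iff_ne_zero.mpr (nonZeroDivisors.coe_ne_zero c)).isSMulRegular

section HasseSquare

variable {R : Type*} [Ring R]

theorem Rat.intCast_tmul_one (n : ℤ) : (n : ℚ) ⊗ₜ[ℤ] (1 : R) = (1 : ℚ) ⊗ₜ (n : R) := by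
  rw [← zsmul_one, smul_tmul, zsmul_one]

theorem Rat.tmul_one_sub_one_tmul_exact [IsAddTorsionFree R]
    (hsat : ∀ d n : ℤ, (d : R) ∣ n → d ∣ n) :
    Function.Exact (fun n : ℤ => ((n : ℚ), (n : R)))
      (fun x : ℚ × R => x.1 ⊗ₜ[ℤ] (1 : R) - (1 : ℚ) ⊗ₜ x.2) := by
  rintro ⟨q, a⟩
  simp only [sub_eq_zero, Set.mem_range, Prod.ext_iff]
  constructor
  · intro h
    have hnum : (q.den : R) * a = q.num := by
      apply Rat.one_tmul_injective
      calc (1 : ℚ) ⊗ₜ[ℤ] ((q.den : R) * a) = q.den • ((1 : ℚ) ⊗ₜ[ℤ] a) := by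
            rw [← nsmul_eq_mul, tmul_smul]
        _ = (q.num : ℚ) ⊗ₜ[ℤ] (1 : R) := by
            rw [← h, smul_tmul', nsmul_eq_mul, Rat.den_mul_eq_num]
        _ = (1 : ℚ) ⊗ₜ[ℤ] (q.num : R) := Rat.intCast_tmul_one q.num
    have hden : q.den = 1 := Nat.Coprime.eq_one_of_dvd q.reduced.symm
      (Int.natCast_dvd.mp (hsat q.den q.num ⟨a, by exact_mod_cast hnum.symm⟩))
    refine ⟨q.num, (Rat.den_eq_one_iff q).mp hden, ?_⟩
    simpa [hden] using hnum.symm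
  · rintro ⟨n, rfl, rfl⟩
    exact Rat.intCast_tmul_one n

theorem Rat.tmul_one_sub_one_tmul_surjective
    (hdense : ∀ n : ℕ, n ≠ 0 → ∀ b : R, ∃ m : ℤ, (n : R) ∣ b - m) :
    Function.Surjective (fun x : ℚ × R => x.1 ⊗ₜ[ℤ] (1 : R) - (1 : ℚ) ⊗ₜ x.2) := by
  intro x
  induction x using TensorProduct.induction_on with
  | zero => exact ⟨0, by simp⟩
  | tmul q b =>
    obtain ⟨m, c, hc⟩ := hdense q.den q.den_nz b
    have hdiv : q ⊗ₜ[ℤ] ((q.den : R) * c) = (1 : ℚ) ⊗ₜ (q.num • c) := by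
      rw [← nsmul_eq_mul, ← smul_tmul, nsmul_eq_mul, Rat.den_mul_eq_num, ← zsmul_one, smul_tmul]
    have hint : q ⊗ₜ[ℤ] (m : R) = (q * m) ⊗ₜ (1 : R) := by
      rw [mul_comm q, ← zsmul_eq_mul, smul_tmul, zsmul_one]
    refine ⟨(q * m, -(q.num • c)), ?_⟩
    dsimp only
    rw [sub_eq_iff_eq_add.mp hc, tmul_add, hdiv, hint, tmul_neg, sub_neg_eq_add, add_comm]
  | add x y hx hy =>
    obtain ⟨u, rfl⟩ := hx
    obtain ⟨v, rfl⟩ := hy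
    exact ⟨u + v, by simp only [Prod.fst_add, Prod.snd_add, add_tmul, tmul_add]; abel⟩

end HasseSquare

theorem Nat.Coprime.exists_intCast_dvd_sub_mul {R : Type*} [CommRing R] {a c : ℕ}
    (hac : a.Coprime c) (ha : ∀ b : R, ∃ m : ℤ, (a : R) ∣ b - m)
    (hc : ∀ b : R, ∃ m : ℤ, (c : R) ∣ b - m) (b : R) :
    ∃ m : ℤ, ((a * c : ℕ) : R) ∣ b - m := by
  obtain ⟨m₁, h₁⟩ := ha b
  obtain ⟨m₂, h₂⟩ := hc b
  obtain ⟨u, v, huv⟩ := Nat.isCoprime_iff_coprime.mpr hac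
  have huv' : (u : R) * a + v * c = 1 := by exact_mod_cast congrArg (Int.cast : ℤ → R) huv
  refine ⟨m₁ * (v * c) + m₂ * (u * a), ?_⟩
  have hsplit : b - ((m₁ * (v * c) + m₂ * (u * a) : ℤ) : R) =
      (b - m₁) * (v * c) + (b - m₂) * (u * a) := by
    push_cast
    linear_combination (-b) * huv'
  rw [hsplit, Nat.cast_mul]
  refine dvd_add (mul_dvd_mul h₁ (Dvd.intro_left _ rfl)) ?_
  rw [mul_comm (a : R)]
  exact mul_dvd_mul h₂ (Dvd.intro_left _ rfl)

namespace HasseProd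

theorem intCast_dvd_intCast {d n : ℤ} : (d : HasseProd) ∣ n ↔ d ∣ n := by
  refine ⟨fun h => ?_, Int.cast_dvd_cast d n⟩
  rw [← Int.natAbs_dvd_natAbs, Nat.dvd_iff_prime_pow_dvd_dvd]
  intro p k hp hpk
  have := Fact.mk hp
  have hd : (p : ℤ_[p]) ^ k ∣ (d : ℤ_[p]) :=
    (PadicInt.pow_p_dvd_int_iff k d).mpr (by exact_mod_cast Int.natCast_dvd.mpr hpk)
  have hn := (PadicInt.pow_p_dvd_int_iff k n).mp (hd.trans (pi_dvd_iff.mp h ⟨p, hp⟩))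
  exact Int.natCast_dvd.mp (by exact_mod_cast hn)

theorem exists_intCast_dvd_sub_prime_pow {p : ℕ} (hp : p.Prime) (k : ℕ) (b : HasseProd) :
    ∃ m : ℤ, ((p ^ k : ℕ) : HasseProd) ∣ b - m := by
  have := Fact.mk hp
  refine ⟨PadicInt.appr (b ⟨p, hp⟩) k, pi_dvd_iff.mpr fun q => ?_⟩
  by_cases hq : q = ⟨p, hp⟩
  · subst hq
    simp only [Int.cast_natCast, Nat.cast_pow]
    exact Ideal.mem_span_singleton.mp (PadicInt.appr_spec k (b ⟨p, hp⟩))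
  · have := Fact.mk q.2
    refine IsUnit.dvd (PadicInt.isUnit_iff.mpr (PadicInt.norm_natCast_eq_one_iff.mpr ?_))
    exact Nat.Coprime.pow_right k ((Nat.coprime_primes q.2 hp).mpr fun h => hq (Subtype.ext h))

theorem exists_intCast_dvd_sub (n : ℕ) (hn : n ≠ 0) (b : HasseProd) :
    ∃ m : ℤ, (n : HasseProd) ∣ b - m := by
  induction n using Nat.recOnPrimeCoprime generalizing b with
  | zero => exact absurd rfl hn
  | prime_pow p k hp => exact exists_intCast_dvd_sub_prime_pow hp k b
  | coprime a c ha hc hac iha ihc =>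
    exact hac.exists_intCast_dvd_sub_mul (iha (by omega)) (ihc (by omega)) b

end HasseProd

/-- The classical Hasse square is both a pullback and a pushout:
`0 → ℤ → ℚ × ∏_p ℤ_p → ℚ ⊗ ∏_p ℤ_p → 0` is exact. -/
theorem hasse_square_exact :
    Function.Injective hasseF ∧ Function.Exact hasseF hasseG ∧
      Function.Surjective hasseG :=
  ⟨fun _ _ h => Int.cast_injective (congrArg Prod.fst h),
    Rat.tmul_one_sub_one_tmul_exact fun _ _ => HasseProd.intCast_dvd_intCast.mp,
    Rat.tmul_one_sub_one_tmul_surjective HasseProd.exists_intCast_dvd_sub⟩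
end

section
/- Let I be an index set, R_i a commutative ring and M_i an R_i-module for each i ∈ I, and set R = ∏_i R_i, so that ⊕_i M_i and ∏_i M_i are R-modules. Let E ⊆ R be a multiplicative subset each of whose elements e = (e_i) satisfies e_i = 1 for all but finitely many i, and suppose each M_i is E-torsion free (for every e ∈ E and every i, multiplication by e_i on M_i is injective). Then the localization maps ⊕_i M_i → E^{-1}(⊕_i M_i) and ∏_i M_i → E^{-1}(∏_i M_i) are both injective, and the natural map E^{-1}(⊕_i M_i) → E^{-1}(∏_i M_i) induces an isomorphism of cokernels (E^{-1}⊕_i M_i)/(⊕_i M_i) ≅ (E^{-1}∏_i M_i)/(∏_i M_i); equivalently, the commutative square formed by ⊕_i M_i, E^{-1}⊕_i M_i, ∏_i M_i, E^{-1}∏_i M_i is a homology isomorphism in the vertical direction. -/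
/-!
Since every `e ∈ E` is `1` outside a finite set, `e • m - m` lies in `⊕ᵢ Mᵢ` for every
`m ∈ ∏ᵢ Mᵢ`: the monoid `E` acts trivially on `∏ᵢ Mᵢ / ⊕ᵢ Mᵢ`. For any injective `f : M → N`
on whose cokernel `S` acts trivially, `S⁻¹M / M → S⁻¹N / N` is bijective: `n / s` is congruent
to `(n - s • n) / s` modulo `N`, with `n - s • n ∈ f M`; and if `f m / s = n / 1`, then
`u • f m = u • s • n` for some `u ∈ S`, so `n ≡ (u * s) • n ≡ 0` modulo `f M`, say `n = f m₀`,
and `m / s = m₀ / 1` by injectivity of `f`. Injectivity of the localization maps is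
torsion-freeness of `⊕ᵢ Mᵢ ⊆ ∏ᵢ Mᵢ`, checked componentwise.
-/

open scoped DirectSum

section

variable {ι : Type} [DecidableEq ι] (Rf : ι → Type) [∀ i, CommRing (Rf i)]
  (Mf : ι → Type) [∀ i, AddCommGroup (Mf i)] [∀ i, Module (Rf i) (Mf i)]

/-- Each `M i` is a module over the product ring `∏ i, R i` via the `i`-th projection. -/
noncomputable local instance moduleOfProj (i : ι) : Module (∀ j, Rf j) (Mf i) :=
  Module.compHom (Mf i) (Pi.evalRingHom Rf i)

/-- The canonical inclusion `⊕ᵢ Mᵢ →ₗ ∏ᵢ Mᵢ` of `∏ᵢ Rᵢ`-modules. -/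
noncomputable def sumToProd : (⨁ i : ι, Mf i) →ₗ[∀ j, Rf j] (∀ i, Mf i) :=
  DirectSum.toModule _ _ _ (fun i => LinearMap.single _ _ i)

/-- The map `E⁻¹(⊕ᵢ Mᵢ) →ₗ E⁻¹(∏ᵢ Mᵢ)` induced by the inclusion. -/
noncomputable def locSumToProd (E : Submonoid (∀ i, Rf i)) :
    LocalizedModule E (⨁ i : ι, Mf i) →ₗ[∀ j, Rf j] LocalizedModule E (∀ i, Mf i) :=
  IsLocalizedModule.map E (LocalizedModule.mkLinearMap E (⨁ i : ι, Mf i))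
    (LocalizedModule.mkLinearMap E (∀ i, Mf i)) (sumToProd Rf Mf)

namespace IsLocalizedModule

variable {R M N M' N' : Type*} [CommRing R] [AddCommGroup M] [Module R M] [AddCommGroup N]
  [Module R N] [AddCommGroup M'] [Module R M'] [AddCommGroup N'] [Module R N']
  (S : Submonoid R) (g : M →ₗ[R] M') (g' : N →ₗ[R] N') [IsLocalizedModule S g]
  [IsLocalizedModule S g'] {f : M →ₗ[R] N}

theorem mem_range_of_map_mem_range (hf : Function.Injective f)
    (hS : ∀ s ∈ S, ∀ n : N, s • n - n ∈ LinearMap.range f) {y : M'}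
    (hy : map S g g' f y ∈ LinearMap.range g') : y ∈ LinearMap.range g := by
  obtain ⟨⟨m, s⟩, rfl⟩ := mk'_surjective S g y
  obtain ⟨n, hn⟩ := hy
  rw [Function.uncurry_apply_pair, map_mk', eq_comm, mk'_eq_iff, ← LinearMap.map_smul_of_tower,
    eq_iff_exists S g'] at hn
  obtain ⟨u, hu⟩ := hn
  obtain ⟨m', hm'⟩ := hS _ (u * s).2 n
  have hm₀ : f (u • m - m') = n := by
    rw [map_sub, LinearMap.map_smul_of_tower, hu, hm', Submonoid.smul_def, Submonoid.smul_def,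
      Submonoid.coe_mul, mul_smul]
    abel
  refine ⟨u • m - m', ?_⟩
  rw [Function.uncurry_apply_pair, eq_comm, mk'_eq_iff, ← LinearMap.map_smul_of_tower,
    eq_iff_exists S g]
  refine ⟨u, hf ?_⟩
  simp only [LinearMap.map_smul_of_tower, hm₀, hu]

theorem mapQ_map_injective (hf : Function.Injective f)
    (hS : ∀ s ∈ S, ∀ n : N, s • n - n ∈ LinearMap.range f) (h) :
    Function.Injective
      (Submodule.mapQ (LinearMap.range g) (LinearMap.range g') (map S g g' f) h) := by
  intro a b hab
  obtain ⟨x, rfl⟩ := Submodule.Quotient.mk_surjective _ a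
  obtain ⟨y, rfl⟩ := Submodule.Quotient.mk_surjective _ b
  rw [Submodule.mapQ_apply, Submodule.mapQ_apply, Submodule.Quotient.eq, ← map_sub] at hab
  exact (Submodule.Quotient.eq _).2 (mem_range_of_map_mem_range S g g' hf hS hab)

theorem mapQ_map_surjective (hS : ∀ s ∈ S, ∀ n : N, s • n - n ∈ LinearMap.range f) (h) :
    Function.Surjective
      (Submodule.mapQ (LinearMap.range g) (LinearMap.range g') (map S g g' f) h) := by
  intro z
  obtain ⟨z, rfl⟩ := Submodule.Quotient.mk_surjective _ z
  obtain ⟨⟨n, s⟩, rfl⟩ := mk'_surjective S g' z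
  obtain ⟨m', hm'⟩ := hS s s.2 n
  refine ⟨Submodule.Quotient.mk (mk' g (-m') s), ?_⟩
  rw [Submodule.mapQ_apply, Submodule.Quotient.eq, Function.uncurry_apply_pair, map_mk',
    ← mk'_sub]
  have hsn : f (-m') - n = s • (-n) := by
    rw [map_neg, hm', Submonoid.smul_def, smul_neg]
    abel
  rw [hsn, mk'_cancel]
  exact LinearMap.mem_range_self g' _

theorem mapQ_map_bijective (hf : Function.Injective f)
    (hS : ∀ s ∈ S, ∀ n : N, s • n - n ∈ LinearMap.range f) (h) :
    Function.Bijective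
      (Submodule.mapQ (LinearMap.range g) (LinearMap.range g') (map S g g' f) h) :=
  ⟨mapQ_map_injective S g g' hf hS h, mapQ_map_surjective S g g' hS h⟩

end IsLocalizedModule

variable {Rf Mf}

theorem sumToProd_apply (d : ⨁ i, Mf i) (i : ι) : sumToProd Rf Mf d i = d i := by
  induction d using DirectSum.induction_on with
  | zero => simp
  | of j x =>
    rw [sumToProd, ← DirectSum.lof_eq_of (∀ j, Rf j)]
    refine (congrFun (DirectSum.toModule_lof _ j x) i).trans ?_
    -- `sumToProd` was built with `Pi.module`, not `Pi.module'`, so `LinearMap.single_apply` misses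
    change Pi.single j x i = DirectSum.of Mf j x i
    rcases eq_or_ne j i with rfl | hji
    · simp
    · simp [hji, DirectSum.of_eq_of_ne _ _ _ hji.symm]
  | add a b ha hb => simp only [map_add, Pi.add_apply, DirectSum.add_apply, ha, hb]

theorem sumToProd_injective : Function.Injective (sumToProd Rf Mf) :=
  fun _ _ h => DFinsupp.ext fun i => by simpa only [sumToProd_apply] using congrFun h i

theorem mem_range_sumToProd_of_finite {v : ∀ i, Mf i} (hv : {i | v i ≠ 0}.Finite) :
    v ∈ LinearMap.range (sumToProd Rf Mf) := by
  classical
  refine ⟨DFinsupp.mk hv.toFinset fun i => v i, funext fun i => ?_⟩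
  by_cases hi : v i = 0 <;> simp [sumToProd_apply, DFinsupp.mk_apply, hi]

theorem smul_sub_self_mem_range_sumToProd {e : ∀ i, Rf i} (he : {i | e i ≠ 1}.Finite)
    (m : ∀ i, Mf i) : e • m - m ∈ LinearMap.range (sumToProd Rf Mf) := by
  refine mem_range_sumToProd_of_finite (he.subset fun i hi hei => hi ?_)
  show e i • m i - m i = 0
  rw [hei, one_smul, sub_self]

/-- for a multiplicative set `E ⊆ ∏ᵢ Rᵢ` whose elements are almost
everywhere `1`, acting torsion-freely on each `Mᵢ`, the localization maps
`⊕ᵢ Mᵢ → E⁻¹(⊕ᵢ Mᵢ)` and `∏ᵢ Mᵢ → E⁻¹(∏ᵢ Mᵢ)` are injective and the natural map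
induces an isomorphism of cokernels. -/
theorem adelic_sum_prod_localization
    (E : Submonoid (∀ i, Rf i))
    (hone : ∀ e ∈ E, {i | e i ≠ 1}.Finite)
    (htf : ∀ e ∈ E, ∀ i, Function.Injective (fun m : Mf i => e i • m)) :
    Function.Injective (LocalizedModule.mkLinearMap E (⨁ i : ι, Mf i)) ∧
    Function.Injective (LocalizedModule.mkLinearMap E (∀ i, Mf i)) ∧
    Function.Bijective
      (Submodule.mapQ (LinearMap.range (LocalizedModule.mkLinearMap E (⨁ i : ι, Mf i)))
        (LinearMap.range (LocalizedModule.mkLinearMap E (∀ i, Mf i)))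
        (locSumToProd Rf Mf E)
        (by
          intro x hx
          obtain ⟨m, rfl⟩ := hx
          exact ⟨sumToProd Rf Mf m,
            (IsLocalizedModule.map_apply E (LocalizedModule.mkLinearMap E (⨁ i : ι, Mf i))
              (LocalizedModule.mkLinearMap E (∀ i, Mf i)) (sumToProd Rf Mf) m).symm⟩)) := by
  have prod_regular (e : E) : IsSMulRegular (∀ i, Mf i) e :=
    IsSMulRegular.pi fun i => htf e e.2 i
  have sum_regular (e : E) : IsSMulRegular (⨁ i, Mf i) e :=
    (prod_regular e).of_injective (sumToProd Rf Mf) sumToProd_injective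
  refine ⟨(IsLocalizedModule.injective_iff_isRegular E _).2 sum_regular,
    (IsLocalizedModule.injective_iff_isRegular E _).2 prod_regular, ?_⟩
  have hS : ∀ e ∈ E, ∀ m : ∀ i, Mf i, e • m - m ∈ LinearMap.range (sumToProd Rf Mf) :=
    fun e he => smul_sub_self_mem_range_sumToProd (hone e he)
  exact IsLocalizedModule.mapQ_map_bijective E (LocalizedModule.mkLinearMap E _)
    (LocalizedModule.mkLinearMap E _) sumToProd_injective hS _

end
end

section
/- Let P = ∏_{n ≥ 1} ℚ[c] (one polynomial-ring factor for each positive integer n), and let E ⊆ P be the multiplicative subset generated by the elements ε_m (m ≥ 1), where the n-th component of ε_m is c if n divides m and 1 otherwise. Consider the two-term cochain complex d : ℚ × P → E^{-1}P, d(q, f) = [f] − q·[1], where [·] denotes the localization map P → E^{-1}P and 1 ∈ P is the tuple all of whose components are the constant polynomial 1. Then ker(d) ≅ ℚ (consisting of the pairs (q, q·1)) and coker(d) ≅ ⊕_{n ≥ 1} ℚ[c, c^{-1}]/ℚ[c]. (This computes the adelic cohomology of rational SO(2)-equivariant stable homotopy theory: H^0 = ℚ and H^1 = ⊕_C H_*(B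 SO(2)/C), the sum over finite cyclic subgroups C.) -/
/-!
Every element of `E` is, componentwise, a power of `c`, and is `1` in all but finitely many
components. The first fact makes `E` consist of non-zero-divisors, so `[f] = q·[1]` forces
`f = q·1`. For the cokernel, the image of `d` is the image of `P`, and localization is functorial
along semilinear maps: taking the `n`-th component `f/e ↦ f_n/e_n` and the inclusion
`g/c^k ↦ (Pi.single n g)/ε_n^k` (semilinear along `p ↦ p(ε_n)`, as `(ε_n)_n = c`) descend to maps
`E⁻¹P/P ⇄ ℚ[c,c⁻¹]/ℚ[c]` whose composites are the identity or zero. Finally `f/e` is congruent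
modulo `P` to the finite sum of its components at the `n` with `e_n ≠ 1`.
-/

open scoped DirectSum

/-- `P = ∏_{n ≥ 1} ℚ[c]`, one polynomial ring factor for each positive integer. -/
abbrev SOtwoP : Type := ∀ _ : ℕ+, Polynomial ℚ

/-- The Euler class `ε_m`, whose `n`-th component is `c` if `n ∣ m` and `1` otherwise. -/
noncomputable def euler (m : ℕ+) : SOtwoP :=
  fun n => if (n : ℕ) ∣ (m : ℕ) then Polynomial.X else 1

/-- The multiplicative set generated by the Euler classes `ε_m`. -/
noncomputable def eulerSet : Submonoid SOtwoP := Submonoid.closure (Set.range euler)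

/-- The differential `d : ℚ × P →+ E⁻¹P`, `d(q, f) = [f] - q·[1]`. -/
noncomputable def soTwoD : ℚ × SOtwoP →+ LocalizedModule eulerSet SOtwoP :=
  (LocalizedModule.mkLinearMap eulerSet SOtwoP).toAddMonoidHom.comp
    ((AddMonoidHom.snd ℚ SOtwoP) -
      (algebraMap ℚ SOtwoP).toAddMonoidHom.comp (AddMonoidHom.fst ℚ SOtwoP))

/-- The inclusion of `ℚ` as the pairs `(q, q·1)`. -/
noncomputable def soTwoKer : ℚ →+ ℚ × SOtwoP :=
  (AddMonoidHom.id ℚ).prod (algebraMap ℚ SOtwoP).toAddMonoidHom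

/-- The cokernel `ℚ[c, c⁻¹]/ℚ[c]` of the localization map `ℚ[c] → ℚ[c][1/c]`. -/
abbrev soTwoCoker : Type :=
  LocalizedModule (Submonoid.powers (Polynomial.X : Polynomial ℚ)) (Polynomial ℚ) ⧸
    LinearMap.range
      (LocalizedModule.mkLinearMap (Submonoid.powers (Polynomial.X : Polynomial ℚ))
        (Polynomial ℚ))

namespace LocalizedModule

section Semilinear

variable {R R' M N : Type*} [CommSemiring R] [CommSemiring R'] [AddCommMonoid M] [Module R M]
  [AddCommMonoid N] [Module R' N] {S : Submonoid R} {T : Submonoid R'} {σ : R →+* R'}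

noncomputable def mapₛₗ (hST : S ≤ T.comap σ) (f : M →ₛₗ[σ] N) :
    LocalizedModule S M →+ LocalizedModule T N where
  toFun x := x.liftOn (fun p => mk (f p.1) ⟨σ p.2, hST p.2.2⟩) (by
    rintro ⟨m, s⟩ ⟨m', s'⟩ ⟨u, hu⟩
    refine mk_eq.mpr ⟨⟨σ u, hST u.2⟩, ?_⟩
    simpa [Submonoid.smul_def] using congrArg f hu)
  map_zero' := by rw [← zero_mk 1, liftOn_mk, map_zero, zero_mk]
  map_add' x y := by
    induction x, y using induction_on₂ with
    | _ m m' s s' =>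
      simp only [mk_add_mk, liftOn_mk, map_add, Submonoid.smul_def, map_smulₛₗ, Submonoid.coe_mul,
        map_mul]
      rfl

@[simp]
lemma mapₛₗ_mk (hST : S ≤ T.comap σ) (f : M →ₛₗ[σ] N) (m : M) (s : S) :
    mapₛₗ hST f (mk m s) = mk (f m) ⟨σ s, hST s.2⟩ :=
  rfl

lemma mapₛₗ_mkLinearMap (hST : S ≤ T.comap σ) (f : M →ₛₗ[σ] N) (m : M) :
    mapₛₗ hST f (mkLinearMap S M m) = mkLinearMap T N (f m) :=
  congrArg (mk (f m)) (Subtype.ext (map_one σ))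

end Semilinear

section SameDenominator

variable {R M : Type*} [CommSemiring R] {S : Submonoid R}

lemma mk_eq_divBy [AddCommMonoid M] [Module R M] (m : M) (s : S) :
    mk m s = divBy s (mkLinearMap S M m) := by
  rw [divBy_apply, mkLinearMap_apply, liftOn_mk, one_mul]

lemma mk_sum [AddCommMonoid M] [Module R M] {ι : Type*} (t : Finset ι) (m : ι → M) (s : S) :
    mk (∑ i ∈ t, m i) s = ∑ i ∈ t, mk (m i) s := by
  simp only [mk_eq_divBy, map_sum]

lemma mk_sub [AddCommGroup M] [Module R M] (m m' : M) (s : S) :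
    mk (m - m') s = mk m s - mk m' s := by
  simp only [mk_eq_divBy, map_sub]

lemma mk_eq_mkLinearMap_of_smul_eq [AddCommMonoid M] [Module R M] {m : M} {s : S}
    (h : s • m = m) : mk m s = mkLinearMap S M m :=
  mk_eq.mpr ⟨1, by rw [one_smul, one_smul, one_smul, h]⟩

end SameDenominator

lemma mk_single_eq_mk_single {ι R : Type*} [DecidableEq ι] [CommSemiring R]
    {S : Submonoid (ι → R)} {s s' : S} {i : ι} (h : (s : ι → R) i = (s' : ι → R) i) (r : R) :
    mk (Pi.single i r : ι → R) s = mk (Pi.single i r : ι → R) s' :=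
  mk_eq.mpr ⟨1, by simp only [one_smul, Submonoid.smul_def, smul_eq_mul, ← Pi.single_mul_right, h]⟩

section Coker

variable {R R' M N : Type*} [CommRing R] [CommRing R'] [AddCommGroup M] [Module R M]
  [AddCommGroup N] [Module R' N] {S : Submonoid R} {T : Submonoid R'} {σ : R →+* R'}

noncomputable def cokerMapₛₗ (hST : S ≤ T.comap σ) (f : M →ₛₗ[σ] N) :
    LocalizedModule S M ⧸ LinearMap.range (mkLinearMap S M) →+
      LocalizedModule T N ⧸ LinearMap.range (mkLinearMap T N) :=
  QuotientAddGroup.map _ _ (mapₛₗ hST f) (by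
    rintro _ ⟨m, rfl⟩
    exact ⟨f m, (mapₛₗ_mkLinearMap hST f m).symm⟩)

@[simp]
lemma cokerMapₛₗ_mk (hST : S ≤ T.comap σ) (f : M →ₛₗ[σ] N) (x : LocalizedModule S M) :
    cokerMapₛₗ hST f (Submodule.Quotient.mk x) = Submodule.Quotient.mk (mapₛₗ hST f x) :=
  rfl

end Coker

end LocalizedModule

open Polynomial LocalizedModule

lemma euler_mem_eulerSet (m : ℕ+) : euler m ∈ eulerSet :=
  Submonoid.subset_closure (Set.mem_range_self m)

lemma euler_apply_self (n : ℕ+) : euler n n = X := if_pos dvd_rfl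

lemma eulerSet_le_comap_evalRingHom (n : ℕ+) :
    eulerSet ≤ (Submonoid.powers X).comap (Pi.evalRingHom (fun _ : ℕ+ => ℚ[X]) n) := by
  refine Submonoid.closure_le.mpr ?_
  rintro _ ⟨m, rfl⟩
  by_cases h : (n : ℕ) ∣ m
  · exact ⟨1, by simp [euler, h]⟩
  · exact ⟨0, by simp [euler, h]⟩

lemma eulerSet_le_nonZeroDivisorsLeft : eulerSet ≤ nonZeroDivisorsLeft SOtwoP := by
  refine Submonoid.closure_le.mpr ?_
  rintro _ ⟨m, rfl⟩ f hf
  funext n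
  have hn : euler m n ≠ 0 := by unfold euler; split <;> simp [X_ne_zero]
  exact (mul_eq_zero.mp (congrFun hf n)).resolve_left hn

lemma eventually_eq_one_of_mem_eulerSet {e : SOtwoP} (he : e ∈ eulerSet) :
    ∀ᶠ n in Filter.cofinite, e n = 1 := by
  induction he using Submonoid.closure_induction with
  | mem _ h =>
    obtain ⟨m, rfl⟩ := h
    refine Filter.eventually_cofinite.mpr ((Set.finite_Iic m).subset fun n hn => ?_)
    by_contra hnm
    exact hn (if_neg fun hdvd => hnm (Nat.le_of_dvd m.pos hdvd))
  | one => exact Filter.Eventually.of_forall fun _ => rfl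
  | mul _ _ _ _ h h' => exact (h.and h').mono fun n hn => by simp [hn.1, hn.2]

lemma aeval_euler_apply_self (n : ℕ+) (p : ℚ[X]) : aeval (euler n) p n = p := by
  have := aeval_algHom_apply (Pi.evalAlgHom ℚ (fun _ : ℕ+ => ℚ[X]) n) (euler n) p
  rw [Pi.evalAlgHom_apply, Pi.evalAlgHom_apply, euler_apply_self, aeval_X_left_apply] at this
  exact this.symm

lemma powers_X_le_comap_aeval_euler (n : ℕ+) :
    Submonoid.powers (X : ℚ[X]) ≤ eulerSet.comap (aeval (euler n)).toRingHom :=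
  Submonoid.powers_le.mpr (by simpa using euler_mem_eulerSet n)

noncomputable def singleₛₗ (n : ℕ+) : ℚ[X] →ₛₗ[(aeval (R := ℚ) (euler n)).toRingHom] SOtwoP where
  toFun g := Pi.single n g
  map_add' := Pi.single_add (f := fun _ => ℚ[X]) n
  map_smul' p g := by
    rw [smul_eq_mul, smul_eq_mul, ← Pi.single_mul_right, AlgHom.toRingHom_eq_coe, RingHom.coe_coe,
      aeval_euler_apply_self]

@[simp]
lemma singleₛₗ_apply (n : ℕ+) (g : ℚ[X]) : singleₛₗ n g = Pi.single n g :=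
  rfl

abbrev eulerCoker : Type :=
  LocalizedModule eulerSet SOtwoP ⧸ LinearMap.range (mkLinearMap eulerSet SOtwoP)

noncomputable def evalCoker (n : ℕ+) : eulerCoker →+ soTwoCoker :=
  cokerMapₛₗ (eulerSet_le_comap_evalRingHom n)
    (Pi.evalRingHom (fun _ : ℕ+ => ℚ[X]) n).toSemilinearMap

noncomputable def singleCoker (n : ℕ+) : soTwoCoker →+ eulerCoker :=
  cokerMapₛₗ (powers_X_le_comap_aeval_euler n) (singleₛₗ n)

lemma evalCoker_singleCoker (m n : ℕ+) (z : soTwoCoker) :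
    evalCoker m (singleCoker n z) = (Pi.single n z : ℕ+ → soTwoCoker) m := by
  obtain ⟨x, rfl⟩ := Submodule.Quotient.mk_surjective _ z
  induction x using LocalizedModule.induction_on with
  | _ g t =>
    rw [evalCoker, singleCoker, cokerMapₛₗ_mk, cokerMapₛₗ_mk, mapₛₗ_mk, mapₛₗ_mk]
    rcases eq_or_ne m n with rfl | hmn
    · rw [Pi.single_eq_same]
      congr 2
      · exact Pi.single_eq_same (M := fun _ => ℚ[X]) m g
      · exact Subtype.ext (aeval_euler_apply_self m t)
    · show Submodule.Quotient.mk (mk ((Pi.single n g : SOtwoP) m) _) = _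
      rw [Pi.single_eq_of_ne hmn, Pi.single_eq_of_ne hmn, zero_mk, Submodule.Quotient.mk_zero]

noncomputable def sumCoker : (⨁ _ : ℕ+, soTwoCoker) →+ eulerCoker :=
  DirectSum.toAddMonoid singleCoker

lemma evalCoker_sumCoker (m : ℕ+) (x : ⨁ _ : ℕ+, soTwoCoker) :
    evalCoker m (sumCoker x) = x m := by
  induction x using DirectSum.induction_on with
  | zero => rw [map_zero, map_zero, DirectSum.zero_apply]
  | of n z =>
    rw [sumCoker, DirectSum.toAddMonoid_of, evalCoker_singleCoker, DirectSum.of,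
      DFinsupp.singleAddHom_apply, DFinsupp.single_eq_pi_single]
  | add x y hx hy => rw [map_add, map_add, hx, hy, DirectSum.add_apply]

lemma sumCoker_injective : Function.Injective sumCoker := fun x y hxy =>
  DFinsupp.ext fun m => by rw [← evalCoker_sumCoker, hxy, evalCoker_sumCoker]

lemma singleCoker_mk (n : ℕ+) (f : SOtwoP) (e : eulerSet) :
    singleCoker n (Submodule.Quotient.mk (mk (f n) ⟨e.1 n, eulerSet_le_comap_evalRingHom n e.2⟩)) =
      Submodule.Quotient.mk (mk (Pi.single n (f n)) e) := by
  rw [singleCoker, cokerMapₛₗ_mk, mapₛₗ_mk, singleₛₗ_apply]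
  exact congrArg _ (mk_single_eq_mk_single (aeval_euler_apply_self n _) _)

lemma exists_sumCoker_eq_mk (f : SOtwoP) (e : eulerSet) :
    ∃ x, sumCoker x = Submodule.Quotient.mk (mk f e) := by
  classical
  obtain ⟨s, hs⟩ : ∃ s : Finset ℕ+, ∀ n ∉ s, e.1 n = 1 :=
    ⟨(Filter.eventually_cofinite.mp (eventually_eq_one_of_mem_eulerSet e.2)).toFinset,
      fun n hn => by simpa using hn⟩
  refine ⟨∑ n ∈ s, DirectSum.of _ n
    (Submodule.Quotient.mk (mk (f n) ⟨e.1 n, eulerSet_le_comap_evalRingHom n e.2⟩)), ?_⟩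
  set g : SOtwoP := ∑ n ∈ s, Pi.single n (f n)
  -- `g - f` vanishes on `s` and `e` is `1` off `s`, so `(g - f)/e` already lies in `P`.
  have hgf : e • (g - f) = g - f := by
    funext n
    by_cases hn : n ∈ s
    · simp [Submonoid.smul_def, g, Finset.sum_pi_single, hn]
    · simp [Submonoid.smul_def, hs n hn]
  rw [map_sum]
  simp only [sumCoker, DirectSum.toAddMonoid_of, singleCoker_mk]
  simp only [← Submodule.mkQ_apply, ← map_sum, ← mk_sum]
  rw [Submodule.mkQ_apply, Submodule.mkQ_apply, Submodule.Quotient.eq, ← mk_sub,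
    mk_eq_mkLinearMap_of_smul_eq hgf]
  exact LinearMap.mem_range_self _ _

lemma sumCoker_surjective : Function.Surjective sumCoker := by
  intro y
  obtain ⟨x, rfl⟩ := Submodule.Quotient.mk_surjective _ y
  induction x using LocalizedModule.induction_on with
  | _ f e => exact exists_sumCoker_eq_mk f e

lemma soTwoD_apply (q : ℚ) (f : SOtwoP) :
    soTwoD (q, f) = mkLinearMap eulerSet SOtwoP (f - algebraMap ℚ SOtwoP q) :=
  rfl

lemma range_soTwoD :
    soTwoD.range = (LinearMap.range (mkLinearMap eulerSet SOtwoP)).toAddSubgroup := by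
  ext x
  constructor
  · rintro ⟨⟨q, f⟩, rfl⟩
    exact ⟨_, rfl⟩
  · rintro ⟨f, rfl⟩
    exact ⟨(0, f), by rw [soTwoD_apply, map_zero, sub_zero]⟩

lemma ker_soTwoD : soTwoD.ker = soTwoKer.range := by
  ext ⟨q, f⟩
  rw [AddMonoidHom.mem_ker, soTwoD_apply, IsLocalizedModule.eq_zero_iff eulerSet,
    AddMonoidHom.mem_range]
  constructor
  · rintro ⟨e, he⟩
    exact ⟨q, Prod.ext rfl (sub_eq_zero.mp (eulerSet_le_nonZeroDivisorsLeft e.2 _ he)).symm⟩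
  · rintro ⟨r, hr⟩
    obtain ⟨rfl, rfl⟩ := Prod.ext_iff.mp hr
    exact ⟨1, by simp [soTwoKer]⟩

/-- the adelic cohomology of rational `SO(2)`-equivariant stable
homotopy theory: for `d(q,f) = [f] - q·[1]` on `ℚ × ∏_{n≥1} ℚ[c]` one has
`ker d ≅ ℚ` (the pairs `(q, q·1)`) and `coker d ≅ ⊕_{n≥1} ℚ[c,c⁻¹]/ℚ[c]`. -/
theorem soTwo_adelic_cohomology :
    soTwoD.ker = soTwoKer.range ∧
    Nonempty ((LocalizedModule eulerSet SOtwoP ⧸ soTwoD.range) ≃+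
      (⨁ _ : ℕ+, soTwoCoker)) :=
  ⟨ker_soTwoD, ⟨(QuotientAddGroup.quotientAddEquivOfEq range_soTwoD).trans
    (AddEquiv.ofBijective sumCoker ⟨sumCoker_injective, sumCoker_surjective⟩).symm⟩⟩
end

section
/- Let C be a category, X a partially ordered set, and for each p ∈ X let L_p : C → C be an endofunctor equipped with a natural transformation η_p : Id → L_p such that L_p η_p = η_p L_p and this common natural transformation L_p → L_p ∘ L_p is a natural isomorphism (L_p is an idempotent localization). Assume the collection is left absorbative: whenever p2 ≤ p1 in X, the natural transformation L_{p1} η_{p2} : L_{p1} → L_{p1} ∘ L_{p2} is a natural isomorphism. Then for p2 ≤ p1 the natural transformation λ_{p2,p1} := (L_{p1} η_{p2})^{-1} ∘ (η_{p1} whiskered on the right with L_{p2}) : L_{p2} → L_{p1} satisfies λ_{p,p} = id and λ_{p2,p1} ∘ λ_{p3,p2} = λ_{p3,p1} whenever p3 ≤ p2 ≤ p1; in other words, p ↦ L_p together with these transformations defines a functor from X to the category of endofunctors of C. -/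
open CategoryTheory

/-- The natural transformation `λ_{p2,p1} : L_{p2} ⟶ L_{p1}` (at the object `Y`),
defined as `(L_{p1} η_{p2})⁻¹ ∘ (η_{p1} L_{p2})` for a left absorbative collection. -/
noncomputable def lamApp {C : Type*} [Category C] {X : Type*} [PartialOrder X]
    (L : X → C ⥤ C) (η : ∀ p, 𝟭 C ⟶ L p) (p2 p1 : X) (Y : C)
    (h : IsIso ((L p1).map ((η p2).app Y))) :
    (L p2).obj Y ⟶ (L p1).obj Y :=
  (η p1).app ((L p2).obj Y) ≫ @inv _ _ _ _ _ h

/-- a left absorbative collection of idempotent localizations on a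
poset `X` gives a functor `X → [C, C]`: the transformations
`λ_{p2,p1} := (L_{p1} η_{p2})⁻¹ ∘ (η_{p1} L_{p2}) : L_{p2} ⟶ L_{p1}` (for `p2 ≤ p1`)
are natural, satisfy `λ_{p,p} = id` and `λ_{p2,p1} ∘ λ_{p3,p2} = λ_{p3,p1}`. -/
theorem left_absorbative_functor {C : Type*} [Category C] {X : Type*} [PartialOrder X]
    (L : X → C ⥤ C) (η : ∀ p, 𝟭 C ⟶ L p)
    -- each `L p` is an idempotent localization: `L_p η_p = η_p L_p` is a natural isomorphism
    (hidem : ∀ p (Y : C), (L p).map ((η p).app Y) = (η p).app ((L p).obj Y))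
    (hidemiso : ∀ p (Y : C), IsIso ((L p).map ((η p).app Y)))
    -- left absorbative: for `p2 ≤ p1`, `L_{p1} η_{p2} : L_{p1} ⟶ L_{p1} ∘ L_{p2}` is an iso
    (habs : ∀ p2 p1, p2 ≤ p1 → ∀ Y : C, IsIso ((L p1).map ((η p2).app Y))) :
    -- naturality of each λ
    (∀ p2 p1 (h : p2 ≤ p1) {Y Z : C} (f : Y ⟶ Z),
      (L p2).map f ≫ lamApp L η p2 p1 Z (habs p2 p1 h Z) =
        lamApp L η p2 p1 Y (habs p2 p1 h Y) ≫ (L p1).map f) ∧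
    -- λ_{p,p} = id
    (∀ p (Y : C), lamApp L η p p Y (habs p p le_rfl Y) = 𝟙 ((L p).obj Y)) ∧
    -- λ_{p3,p2} followed by λ_{p2,p1} is λ_{p3,p1}
    (∀ p3 p2 p1 (h32 : p3 ≤ p2) (h21 : p2 ≤ p1) (Y : C),
      lamApp L η p3 p2 Y (habs p3 p2 h32 Y) ≫ lamApp L η p2 p1 Y (habs p2 p1 h21 Y) =
        lamApp L η p3 p1 Y (habs p3 p1 (h32.trans h21) Y)) := by
  refine ⟨?_, ?_, ?_⟩
  · intro p2 p1 h Y Z f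
    haveI := habs p2 p1 h Y
    haveI := habs p2 p1 h Z
    unfold lamApp
    have hnat := (η p1).naturality ((L p2).map f)
    simp only [Functor.id_map] at hnat
    rw [← Category.assoc, hnat]
    simp only [Category.assoc]
    congr 1
    have hn2 := (η p2).naturality f
    simp only [Functor.id_map] at hn2
    rw [IsIso.eq_inv_comp, ← Category.assoc, ← Functor.map_comp, ← hn2,
      Functor.map_comp, Category.assoc, IsIso.hom_inv_id, Category.comp_id]
  · intro p Y
    haveI := hidemiso p Y
    unfold lamApp
    rw [← hidem p Y, IsIso.hom_inv_id]
  · intro p3 p2 p1 h32 h21 Y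
    haveI i32 := habs p3 p2 h32 Y
    haveI i21 := habs p2 p1 h21 Y
    haveI i31 := habs p3 p1 (h32.trans h21) Y
    unfold lamApp
    have h2 : inv ((L p2).map ((η p3).app Y)) ≫ (η p1).app ((L p2).obj Y) =
        (η p1).app ((L p2).obj ((L p3).obj Y)) ≫ (L p1).map (inv ((L p2).map ((η p3).app Y))) := by
      have := (η p1).naturality (inv ((L p2).map ((η p3).app Y)))
      simpa using this
    have h1 : (η p2).app ((L p3).obj Y) ≫ (η p1).app ((L p2).obj ((L p3).obj Y)) =
        (η p1).app ((L p3).obj Y) ≫ (L p1).map ((η p2).app ((L p3).obj Y)) := by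
      have := (η p1).naturality ((η p2).app ((L p3).obj Y))
      simpa using this
    have h3 : (η p3).app Y ≫ (η p2).app ((L p3).obj Y) =
        (η p2).app Y ≫ (L p2).map ((η p3).app Y) := by
      have := (η p2).naturality ((η p3).app Y)
      simpa using this
    calc ((η p2).app ((L p3).obj Y) ≫ inv ((L p2).map ((η p3).app Y))) ≫
          (η p1).app ((L p2).obj Y) ≫ inv ((L p1).map ((η p2).app Y))
        = (η p2).app ((L p3).obj Y) ≫ (η p1).app ((L p2).obj ((L p3).obj Y)) ≫
          (L p1).map (inv ((L p2).map ((η p3).app Y))) ≫ inv ((L p1).map ((η p2).app Y)) := by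
          simp only [Category.assoc]
          congr 1
          rw [← Category.assoc, h2, Category.assoc]
      _ = (η p1).app ((L p3).obj Y) ≫ (L p1).map ((η p2).app ((L p3).obj Y)) ≫
          (L p1).map (inv ((L p2).map ((η p3).app Y))) ≫ inv ((L p1).map ((η p2).app Y)) := by
          rw [← Category.assoc, h1, Category.assoc]
      _ = (η p1).app ((L p3).obj Y) ≫ inv ((L p1).map ((η p3).app Y)) := by
          congr 1
          apply IsIso.eq_inv_of_hom_inv_id
          rw [← Category.assoc, ← Functor.map_comp, h3]
          simp [Functor.map_comp]
end

section
/- Let C be a category, X a partially ordered set, and for each p ∈ X let Λ_p : C → C be an endofunctor with natural transformation η_p : Id → Λ_p such that Λ_p η_p = η_p Λ_p is a natural isomorphism Λ_p ≅ Λ_p² (an idempotent localization). Assume the collection is right absorbative: whenever p2 ≤ p1 in X, the natural transformation η_{p1} whiskered on the right with Λ_{p2}, namely Λ_{p2} → Λ_{p1} ∘ Λ_{p2}, is a natural isomorphism. Then for p2 ≤ p1 the natural transformation μ_{p1,p2} := (η_{p1} Λ_{p2})^{-1} ∘ (Λ_{p1} η_{p2}) : Λ_{p1} → Λ_{p2}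 satisfies μ_{p,p} = id and μ_{p2,p3} ∘ μ_{p1,p2} = μ_{p1,p3} whenever p3 ≤ p2 ≤ p1; in other words, p ↦ Λ_p together with these transformations defines a functor from X^{op} to the category of endofunctors of C. -/
open CategoryTheory

/-- The natural transformation `μ_{p1,p2} : Λ_{p1} ⟶ Λ_{p2}` (at the object `Y`),
defined as `(η_{p1} Λ_{p2})⁻¹ ∘ (Λ_{p1} η_{p2})` for a right absorbative collection. -/
noncomputable def muApp {C : Type*} [Category C] {X : Type*} [PartialOrder X]
    (Λ : X → C ⥤ C) (η : ∀ p, 𝟭 C ⟶ Λ p) (p1 p2 : X) (Y : C)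
    (h : IsIso ((η p1).app ((Λ p2).obj Y))) :
    (Λ p1).obj Y ⟶ (Λ p2).obj Y :=
  (Λ p1).map ((η p2).app Y) ≫ @inv _ _ _ _ _ h

/-- a right absorbative collection of idempotent localizations on a
poset `X` gives a functor `Xᵒᵖ → [C, C]`: the transformations
`μ_{p1,p2} := (η_{p1} Λ_{p2})⁻¹ ∘ (Λ_{p1} η_{p2}) : Λ_{p1} ⟶ Λ_{p2}` (for `p2 ≤ p1`)
are natural, satisfy `μ_{p,p} = id` and `μ_{p2,p3} ∘ μ_{p1,p2} = μ_{p1,p3}`. -/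
theorem right_absorbative_functor {C : Type*} [Category C] {X : Type*} [PartialOrder X]
    (Λ : X → C ⥤ C) (η : ∀ p, 𝟭 C ⟶ Λ p)
    -- each `Λ p` is an idempotent localization: `Λ_p η_p = η_p Λ_p` is a natural isomorphism
    (hidem : ∀ p (Y : C), (Λ p).map ((η p).app Y) = (η p).app ((Λ p).obj Y))
    (hidemiso : ∀ p (Y : C), IsIso ((Λ p).map ((η p).app Y)))
    -- right absorbative: for `p2 ≤ p1`, `η_{p1} Λ_{p2} : Λ_{p2} ⟶ Λ_{p1} ∘ Λ_{p2}` is an iso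
    (habs : ∀ p2 p1, p2 ≤ p1 → ∀ Y : C, IsIso ((η p1).app ((Λ p2).obj Y))) :
    -- naturality of each μ
    (∀ p2 p1 (h : p2 ≤ p1) {Y Z : C} (f : Y ⟶ Z),
      (Λ p1).map f ≫ muApp Λ η p1 p2 Z (habs p2 p1 h Z) =
        muApp Λ η p1 p2 Y (habs p2 p1 h Y) ≫ (Λ p2).map f) ∧
    -- μ_{p,p} = id
    (∀ p (Y : C), muApp Λ η p p Y (habs p p le_rfl Y) = 𝟙 ((Λ p).obj Y)) ∧
    -- μ_{p1,p2} followed by μ_{p2,p3} is μ_{p1,p3}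
    (∀ p3 p2 p1 (h32 : p3 ≤ p2) (h21 : p2 ≤ p1) (Y : C),
      muApp Λ η p1 p2 Y (habs p2 p1 h21 Y) ≫ muApp Λ η p2 p3 Y (habs p3 p2 h32 Y) =
        muApp Λ η p1 p3 Y (habs p3 p1 (h32.trans h21) Y)) := by

  refine ⟨?_, ?_, ?_⟩
  · intro p2 p1 h Y Z f
    haveI := habs p2 p1 h Y
    haveI := habs p2 p1 h Z
    unfold muApp
    have n1 : (Λ p1).map ((Λ p2).map f) ≫ inv ((η p1).app ((Λ p2).obj Z)) =
        inv ((η p1).app ((Λ p2).obj Y)) ≫ (Λ p2).map f := by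
      rw [IsIso.eq_inv_comp, ← Category.assoc, IsIso.comp_inv_eq]
      simpa using ((η p1).naturality ((Λ p2).map f)).symm
    calc (Λ p1).map f ≫ (Λ p1).map ((η p2).app Z) ≫ inv ((η p1).app ((Λ p2).obj Z))
        = (Λ p1).map ((η p2).app Y) ≫ ((Λ p1).map ((Λ p2).map f) ≫
            inv ((η p1).app ((Λ p2).obj Z))) := by
          rw [← Category.assoc, ← Functor.map_comp]
          have := (η p2).naturality f
          simp only [Functor.id_map] at this
          rw [this, Functor.map_comp, Category.assoc]
      _ = (Λ p1).map ((η p2).app Y) ≫ inv ((η p1).app ((Λ p2).obj Y)) ≫ (Λ p2).map f := by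
          rw [n1]
      _ = ((Λ p1).map ((η p2).app Y) ≫ inv ((η p1).app ((Λ p2).obj Y))) ≫ (Λ p2).map f := by
          rw [Category.assoc]
  · intro p Y
    haveI := habs p p le_rfl Y
    unfold muApp
    rw [IsIso.comp_inv_eq, Category.id_comp, hidem]
  · intro p3 p2 p1 h32 h21 Y
    haveI ha := habs p2 p1 h21 Y
    haveI hb := habs p3 p2 h32 Y
    haveI hc := habs p3 p1 (h32.trans h21) Y
    haveI hd := habs p2 p1 h21 ((Λ p3).obj Y)
    unfold muApp
    have key1 : inv ((η p1).app ((Λ p2).obj Y)) ≫ (Λ p2).map ((η p3).app Y) =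
        (Λ p1).map ((Λ p2).map ((η p3).app Y)) ≫
          inv ((η p1).app ((Λ p2).obj ((Λ p3).obj Y))) := by
      rw [IsIso.eq_comp_inv, Category.assoc, IsIso.inv_comp_eq]
      simpa using (η p1).naturality ((Λ p2).map ((η p3).app Y))
    have key2 : (Λ p1).map ((η p2).app ((Λ p3).obj Y)) ≫
        inv ((η p1).app ((Λ p2).obj ((Λ p3).obj Y))) ≫
        inv ((η p2).app ((Λ p3).obj Y)) = inv ((η p1).app ((Λ p3).obj Y)) := by
      apply IsIso.eq_inv_of_hom_inv_id
      have nat := (η p1).naturality ((η p2).app ((Λ p3).obj Y))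
      simp only [Functor.id_map, Functor.id_obj] at nat
      rw [← Category.assoc, ← nat, Category.assoc, IsIso.hom_inv_id_assoc, IsIso.hom_inv_id]
    have key3 : (Λ p1).map ((η p2).app Y) ≫ (Λ p1).map ((Λ p2).map ((η p3).app Y)) =
        (Λ p1).map ((η p3).app Y) ≫ (Λ p1).map ((η p2).app ((Λ p3).obj Y)) := by
      rw [← Functor.map_comp, ← Functor.map_comp]
      congr 1
      simpa using ((η p2).naturality ((η p3).app Y)).symm
    calc ((Λ p1).map ((η p2).app Y) ≫ inv ((η p1).app ((Λ p2).obj Y))) ≫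
          (Λ p2).map ((η p3).app Y) ≫ inv ((η p2).app ((Λ p3).obj Y))
        = (Λ p1).map ((η p2).app Y) ≫ (Λ p1).map ((Λ p2).map ((η p3).app Y)) ≫
            inv ((η p1).app ((Λ p2).obj ((Λ p3).obj Y))) ≫
            inv ((η p2).app ((Λ p3).obj Y)) := by
          rw [Category.assoc, ← Category.assoc (inv _), key1]
          simp only [Category.assoc]
      _ = (Λ p1).map ((η p3).app Y) ≫ (Λ p1).map ((η p2).app ((Λ p3).obj Y)) ≫
            inv ((η p1).app ((Λ p2).obj ((Λ p3).obj Y))) ≫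
            inv ((η p2).app ((Λ p3).obj Y)) := by
          rw [← Category.assoc, key3, Category.assoc]
      _ = (Λ p1).map ((η p3).app Y) ≫ inv ((η p1).app ((Λ p3).obj Y)) := by
          rw [key2]
end

section
/- Let X be a partially ordered set, C a category admitting all small products, M : X^{op} → C a coefficient system, and for each p ∈ X a pointed endofunctor (A_p, η_p : Id → A_p) of C. Define the adelic cochains C^s = ∏_{p0} A_{p0}( ∏_{p1 < p0} A_{p1}( ⋯ ∏_{ps < p_{s-1}} A_{ps} M(p_s) ⋯ )) over flags p0 > p1 > ⋯ > ps in X, and maps δ_i : C^s → C^{s+1} for 0 ≤ i ≤ s+1, where for i ≤ s the map δ_i is given by applying the unit transformation N → A_{p_i}N at the i-th spot of an (s+1)-flag (and the same sequence of products and functors to domain and codomain), and δ_{s+1} is induced by the structure maps M(p_s) → M(p_{s+1}) of the coefficient system followed by the unit of A_{p_{s+1}}. Then for all 0 ≤ a < b ≤ s+2 one has δ_b ∘ δ_a = δ_a ∘ δ_{b−1} as maps C^s → C^{s+2}; consequently δ := Σ_i (−1)^i δ_i satisfies δ ∘ δ = 0, so (C^*, δ) is a cochain complex. -/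
/-!
Each face map is built from restrictions between products over the flags below a point (the
coefficient maps `M(p) ⟶ M(q)` being the innermost ones), each followed by a unit `η_q`.
Two facts then give all the cosimplicial identities: units are natural, so inserting via `η_q`
commutes with `A_q` applied to any map compatible with the restrictions; and restrictions
compose (transitivity of `<`, functoriality of `M`). An induction on the depth of the inner
insertion reduces every identity `δ_b ∘ δ_a = δ_a ∘ δ_{b-1}` to one of these two squares.
Then `δ ∘ δ = 0` by the usual sign-reversing involution on pairs of indices.
-/


open CategoryTheory CategoryTheory.Limits Opposite

universe u v w

section AdelicMachinery

variable {X : Type u} [PartialOrder X] {C : Type v} [Category.{w} C]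
  [HasProducts.{u} C]
variable (A : X → C ⥤ C) (η : ∀ p, 𝟭 C ⟶ A p) (M : Xᵒᵖ ⥤ C)

/-- The nested adelic objects over flags in the poset `X`:
`G s p = A_p (∏_{q < p} A_q ( ⋯ ∏_{q_s < q_{s-1}} A_{q_s}(M(q_s)) ⋯ ))`. -/
noncomputable def G : ℕ → X → C
  | 0, p => (A p).obj (M.obj (op p))
  | k + 1, p => (A p).obj (∏ᶜ fun q : {q : X // q < p} => G k q.1)

/-- Insertion of a new flag entry immediately below `p`, via the units `N → A_q N`. -/
noncomputable def phi (k : ℕ) (p : X) :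
    (∏ᶜ fun q : {q : X // q < p} => G A M k q.1) ⟶
      (∏ᶜ fun q : {q : X // q < p} => G A M (k + 1) q.1) :=
  Pi.lift fun q' =>
    (Pi.lift fun r : {r : X // r < q'.1} =>
        Pi.π (fun q : {q : X // q < p} => G A M k q.1) ⟨r.1, lt_trans r.2 q'.2⟩) ≫
      (η q'.1).app (∏ᶜ fun r : {r : X // r < q'.1} => G A M k r.1)

/-- Insertion below the innermost flag entry: the coefficient structure maps
`M(p) → M(q)` followed by the units `M(q) → A_q M(q)`. -/
noncomputable def psi (p : X) :
    M.obj (op p) ⟶ (∏ᶜ fun q : {q : X // q < p} => G A M 0 q.1) :=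
  Pi.lift fun q => M.map (homOfLE (le_of_lt q.2)).op ≫ (η q.1).app (M.obj (op q.1))

/-- `ins i s p : G s p ⟶ G (s+1) p` inserts a new flag entry at depth `i+1`
below `p`. -/
noncomputable def ins : ℕ → (s : ℕ) → (p : X) → (G A M s p ⟶ G A M (s + 1) p)
  | 0, 0, p => (A p).map (psi A η M p)
  | 0, k + 1, p => (A p).map (phi A η M k p)
  | _ + 1, 0, p => (A p).map (psi A η M p)
  | i + 1, k + 1, p => (A p).map
      (CategoryTheory.Limits.Pi.map fun q : {q : X // q < p} => ins i k q.1)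

/-- The `i`-th face map `δᵢ : C^s ⟶ C^{s+1}` of the adelic cochain complex:
`δ₀` inserts a new initial flag entry via the unit, `δᵢ` (`1 ≤ i ≤ s`) inserts a
flag entry at depth `i` via the unit, `δ_{s+1}` inserts a final entry via the
coefficient structure maps. -/
noncomputable def delta (s i : ℕ) :
    (∏ᶜ fun p : X => G A M s p) ⟶ (∏ᶜ fun p : X => G A M (s + 1) p) :=
  if i = 0 then
    Pi.lift fun p =>
      (Pi.lift fun q : {q : X // q < p} => Pi.π (fun p' : X => G A M s p') q.1) ≫
        (η p).app (∏ᶜ fun q : {q : X // q < p} => G A M s q.1)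
  else
    CategoryTheory.Limits.Pi.map fun p => ins (A := A) (η := η) (M := M) (i - 1) s p

end AdelicMachinery

theorem alternating_sum_comp_alternating_sum_eq_zero {C : Type*} [Category* C] [Preadditive C]
    {P Q R : C} (n : ℕ) (d : ℕ → (P ⟶ Q)) (d' : ℕ → (Q ⟶ R))
    (h : ∀ a b, a < b → b ≤ n + 1 → d a ≫ d' b = d (b - 1) ≫ d' a) :
    (∑ i ∈ Finset.range (n + 1), (-1 : ℤ) ^ i • d i) ≫
      (∑ j ∈ Finset.range (n + 2), (-1 : ℤ) ^ j • d' j) = 0 := by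
  rw [Preadditive.sum_comp]
  simp only [Preadditive.comp_sum, Preadditive.zsmul_comp,
    Preadditive.comp_zsmul, smul_smul, ← pow_add]
  rw [← Finset.sum_product']
  -- `(i, j) ↦ (j, i + 1)` for `j ≤ i`, and its inverse for `i < j`, pairs off cancelling terms
  refine Finset.sum_involution
    (fun (x : ℕ × ℕ) _ => if x.2 ≤ x.1 then (x.2, x.1 + 1) else (x.2 - 1, x.1)) ?_ ?_ ?_ ?_
  · rintro ⟨i, j⟩ hij
    simp only [Finset.mem_product, Finset.mem_range] at hij
    split_ifs with hji <;> dsimp only at hji ⊢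
    · rw [h j (i + 1) (by omega) (by omega), Nat.add_sub_cancel, ← add_smul]
      convert zero_smul ℤ (d i ≫ d' j)
      ring
    · obtain ⟨j, rfl⟩ : ∃ j', j = j' + 1 := ⟨j - 1, by omega⟩
      rw [h i (j + 1) (by omega) (by omega), Nat.add_sub_cancel, ← add_smul]
      convert zero_smul ℤ (d j ≫ d' i)
      ring
  · rintro ⟨i, j⟩ - -
    split_ifs <;> simp only [ne_eq, Prod.mk.injEq] <;> omega
  · rintro ⟨i, j⟩ hij
    simp only [Finset.mem_product, Finset.mem_range] at hij
    split_ifs <;> simp only [Finset.mem_product, Finset.mem_range] <;> omega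
  · rintro ⟨i, j⟩ -
    dsimp only
    split_ifs <;> dsimp only at * <;> rw [Prod.mk.injEq] <;> omega

section Restriction

variable {X : Type u} [Preorder X] {C : Type v} [Category.{w} C] [HasProducts.{u} C]

noncomputable def restrictBelow (F : X → C) (p : X) :
    (∏ᶜ F) ⟶ ∏ᶜ fun q : {q : X // q < p} => F q.1 :=
  Pi.lift fun q => Pi.π F q.1

noncomputable def restrictBelowOfLT (F : X → C) {p q : X} (hqp : q < p) :
    (∏ᶜ fun t : {t : X // t < p} => F t.1) ⟶ ∏ᶜ fun r : {r : X // r < q} => F r.1 :=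
  Pi.lift fun r => Pi.π (fun t : {t : X // t < p} => F t.1) ⟨r.1, r.2.trans hqp⟩

variable (F : X → C)

@[simp]
lemma restrictBelow_π (p : X) (q : {q : X // q < p}) :
    restrictBelow F p ≫ Pi.π _ q = Pi.π F q.1 :=
  Pi.lift_π _ _

@[simp]
lemma restrictBelowOfLT_π {p q : X} (hqp : q < p) (r : {r : X // r < q}) :
    restrictBelowOfLT F hqp ≫ Pi.π _ r =
      Pi.π (fun t : {t : X // t < p} => F t.1) ⟨r.1, r.2.trans hqp⟩ :=
  Pi.lift_π _ _

lemma restrictBelow_comp_restrictBelowOfLT {p q : X} (hqp : q < p) :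
    restrictBelow F p ≫ restrictBelowOfLT F hqp = restrictBelow F q := by
  ext; simp

lemma restrictBelowOfLT_comp_restrictBelowOfLT {p q r : X} (hqp : q < p) (hrq : r < q) :
    restrictBelowOfLT F hqp ≫ restrictBelowOfLT F hrq = restrictBelowOfLT F (hrq.trans hqp) := by
  ext; simp

variable {F} {F' : X → C} (f : ∀ x, F x ⟶ F' x)

lemma map_comp_restrictBelow (p : X) :
    Limits.Pi.map f ≫ restrictBelow F' p =
      restrictBelow F p ≫ Limits.Pi.map fun q : {q : X // q < p} => f q.1 := by
  ext; simp [restrictBelow]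

lemma map_comp_restrictBelowOfLT {p q : X} (hqp : q < p) :
    (Limits.Pi.map fun t : {t : X // t < p} => f t.1) ≫ restrictBelowOfLT F' hqp =
      restrictBelowOfLT F hqp ≫ Limits.Pi.map fun r : {r : X // r < q} => f r.1 := by
  ext; simp [restrictBelowOfLT]

end Restriction

section UnitInsertion

variable {X : Type u} {C : Type v} [Category.{w} C] [HasProducts.{u} C]
  (A : X → C ⥤ C) (η : ∀ p, 𝟭 C ⟶ A p)

lemma lift_unit_comp_map {ι : Type u} (x : ι → X) {P Q : C} {Y Z : ι → C}
    (f : ∀ i, P ⟶ Y i) (g : ∀ i, Y i ⟶ Z i) (u : P ⟶ Q) (f' : ∀ i, Q ⟶ Z i)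
    (h : ∀ i, f i ≫ g i = u ≫ f' i) :
    Pi.lift (fun i => f i ≫ (η (x i)).app (Y i)) ≫
        Limits.Pi.map (fun i => (A (x i)).map (g i)) =
      u ≫ Pi.lift fun i => f' i ≫ (η (x i)).app (Z i) := by
  ext i
  have hη := (η (x i)).naturality (g i)
  dsimp at hη
  simp [← hη, reassoc_of% (h i)]

end UnitInsertion

section Faces

variable {X : Type u} [PartialOrder X] {C : Type v} [Category.{w} C] [HasProducts.{u} C]
  (A : X → C ⥤ C) (η : ∀ p, 𝟭 C ⟶ A p) (M : Xᵒᵖ ⥤ C)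

@[simp]
lemma psi_π (p : X) (q : {q : X // q < p}) :
    psi A η M p ≫ Pi.π _ q = M.map (homOfLE q.2.le).op ≫ (η q.1).app (M.obj (op q.1)) :=
  Pi.lift_π _ _

@[simp]
lemma phi_π (k : ℕ) (p : X) (q : {q : X // q < p}) :
    phi A η M k p ≫ Pi.π _ q =
      restrictBelowOfLT (G A M k) q.2 ≫
        (η q.1).app (∏ᶜ fun r : {r : X // r < q.1} => G A M k r.1) :=
  Pi.lift_π _ _

lemma delta_zero (s : ℕ) :
    delta A η M s 0 = Pi.lift fun p => restrictBelow (G A M s) p ≫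
      (η p).app (∏ᶜ fun q : {q : X // q < p} => G A M s q.1) :=
  if_pos rfl

@[simp]
lemma delta_zero_π (s : ℕ) (p : X) :
    delta A η M s 0 ≫ Pi.π _ p =
      restrictBelow (G A M s) p ≫
        (η p).app (∏ᶜ fun q : {q : X // q < p} => G A M s q.1) := by
  rw [delta_zero]
  exact Pi.lift_π _ _

lemma delta_succ (s i : ℕ) : delta A η M s (i + 1) = Limits.Pi.map (ins A η M i s) :=
  if_neg i.succ_ne_zero

@[simp]
lemma ins_zero_right (i : ℕ) (p : X) : ins A η M i 0 p = (A p).map (psi A η M p) := by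
  cases i <;> rfl

@[simp]
lemma ins_zero_succ (k : ℕ) (p : X) : ins A η M 0 (k + 1) p = (A p).map (phi A η M k p) := rfl

@[simp]
lemma ins_succ_succ (i k : ℕ) (p : X) :
    ins A η M (i + 1) (k + 1) p =
      (A p).map (Limits.Pi.map fun q : {q : X // q < p} => ins A η M i k q.1) := rfl

lemma psi_comp_restrictBelowOfLT {p q : X} (hqp : q < p) :
    psi A η M p ≫ restrictBelowOfLT (G A M 0) hqp =
      M.map (homOfLE hqp.le).op ≫ psi A η M q := by
  ext r
  simp only [Category.assoc, restrictBelowOfLT_π, psi_π]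
  exact M.map_comp_assoc _ _ _

lemma phi_comp_restrictBelowOfLT (k : ℕ) {p q : X} (hqp : q < p) :
    phi A η M k p ≫ restrictBelowOfLT (G A M (k + 1)) hqp =
      restrictBelowOfLT (G A M k) hqp ≫ phi A η M k q := by
  ext r
  simp only [Category.assoc, restrictBelowOfLT_π, phi_π]
  exact ((reassoc_of% (restrictBelowOfLT_comp_restrictBelowOfLT (G A M k) hqp r.2)) _).symm

lemma delta_zero_comp_restrictBelow (s : ℕ) (p : X) :
    delta A η M s 0 ≫ restrictBelow (G A M (s + 1)) p =
      restrictBelow (G A M s) p ≫ phi A η M s p := by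
  ext q
  simp only [Category.assoc, restrictBelow_π, delta_zero_π, phi_π]
  exact ((reassoc_of% (restrictBelow_comp_restrictBelowOfLT (G A M s) q.2)) _).symm

lemma psi_comp_map_psi (p : X) :
    psi A η M p ≫ Limits.Pi.map (fun q : {q : X // q < p} => (A q.1).map (psi A η M q.1)) =
      psi A η M p ≫ phi A η M 0 p :=
  lift_unit_comp_map A η Subtype.val _ _ _ _ fun q =>
    (psi_comp_restrictBelowOfLT A η M q.2).symm

lemma phi_comp_map_phi (k : ℕ) (p : X) :
    phi A η M k p ≫ Limits.Pi.map (fun q : {q : X // q < p} => (A q.1).map (phi A η M k q.1)) =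
      phi A η M k p ≫ phi A η M (k + 1) p :=
  lift_unit_comp_map A η Subtype.val _ _ _ _ fun q =>
    (phi_comp_restrictBelowOfLT A η M k q.2).symm

lemma phi_naturality (k : ℕ) (f : ∀ x, G A M k x ⟶ G A M (k + 1) x) (p : X) :
    phi A η M k p ≫ Limits.Pi.map (fun q : {q : X // q < p} =>
        (A q.1).map (Limits.Pi.map fun r : {r : X // r < q.1} => f r.1)) =
      (Limits.Pi.map fun q : {q : X // q < p} => f q.1) ≫ phi A η M (k + 1) p :=
  lift_unit_comp_map A η Subtype.val _ _ _ _ fun q => (map_comp_restrictBelowOfLT f q.2).symm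

lemma delta_zero_comp_map_phi (s : ℕ) :
    delta A η M s 0 ≫ Limits.Pi.map (fun p => (A p).map (phi A η M s p)) =
      delta A η M s 0 ≫ delta A η M (s + 1) 0 :=
  lift_unit_comp_map A η (fun p => p) _ _ _ _ fun p =>
    (delta_zero_comp_restrictBelow A η M s p).symm

lemma delta_zero_naturality (s : ℕ) (f : ∀ x, G A M s x ⟶ G A M (s + 1) x) :
    delta A η M s 0 ≫ Limits.Pi.map (fun p =>
        (A p).map (Limits.Pi.map fun q : {q : X // q < p} => f q.1)) =
      Limits.Pi.map f ≫ delta A η M (s + 1) 0 :=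
  lift_unit_comp_map A η (fun p => p) _ _ _ _ fun p => (map_comp_restrictBelow f p).symm

lemma ins_comp_ins (s : ℕ) {a j : ℕ} (haj : a ≤ j) (p : X) :
    ins A η M a s p ≫ ins A η M (j + 1) (s + 1) p =
      ins A η M j s p ≫ ins A η M a (s + 1) p := by
  induction s generalizing a j p with
  | zero =>
    rcases a with _ | a
    · simp only [ins_zero_right, ins_succ_succ, ins_zero_succ]
      exact ((A p).map_commSq ⟨psi_comp_map_psi A η M p⟩).w
    · simp only [ins_zero_right, ins_succ_succ]
  | succ k ih =>
    rcases a with _ | a <;> rcases j with _ | j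
    · exact ((A p).map_commSq ⟨phi_comp_map_phi A η M k p⟩).w
    · exact ((A p).map_commSq ⟨phi_naturality A η M k (ins A η M j k) p⟩).w
    · omega
    · refine ((A p).map_commSq ⟨?_⟩).w
      simp only [Limits.Pi.map_comp_map, ih (Nat.le_of_succ_le_succ haj)]

theorem delta_comp_delta (s : ℕ) {a b : ℕ} (hab : a < b) :
    delta A η M s a ≫ delta A η M (s + 1) b =
      delta A η M s (b - 1) ≫ delta A η M (s + 1) a := by
  obtain ⟨b, rfl⟩ : ∃ b', b = b' + 1 := ⟨b - 1, by omega⟩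
  rw [Nat.add_sub_cancel]
  rcases a with _ | a <;> rcases b with _ | b
  · rw [delta_succ]
    exact delta_zero_comp_map_phi A η M s
  · rw [delta_succ, delta_succ]
    exact delta_zero_naturality A η M s (ins A η M b s)
  · omega
  · simp only [delta_succ, Limits.Pi.map_comp_map,
      ins_comp_ins A η M s (by omega : a ≤ b)]

end Faces

/-- for a poset `X`, a category `C` with small products, a coefficient
system `M : Xᵒᵖ ⥤ C` and pointed endofunctors `(A_p, η_p)`, the adelic face maps
satisfy the cosimplicial identity `δ_b ∘ δ_a = δ_a ∘ δ_{b-1}` for `a < b`; hence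
(when `C` is preadditive) `δ = Σ (-1)ⁱ δᵢ` satisfies `δ ∘ δ = 0`, so the adelic
cochains form a cochain complex. -/
theorem adelic_cochain_complex
    {X : Type u} [PartialOrder X] {C : Type v} [Category.{w} C] [Preadditive C]
    [HasProducts.{u} C]
    (A : X → C ⥤ C) (η : ∀ p, 𝟭 C ⟶ A p) (M : Xᵒᵖ ⥤ C) :
    (∀ s a b : ℕ, a < b → b ≤ s + 2 →
      delta A η M s a ≫ delta A η M (s + 1) b =
        delta A η M s (b - 1) ≫ delta A η M (s + 1) a) ∧
    (∀ s : ℕ,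
      (∑ i ∈ Finset.range (s + 2), ((-1 : ℤ) ^ i) • delta A η M s i) ≫
        (∑ i ∈ Finset.range (s + 3), ((-1 : ℤ) ^ i) • delta A η M (s + 1) i) = 0) := by
  refine ⟨fun s a b hab _ => delta_comp_delta A η M s hab, fun s => ?_⟩
  exact alternating_sum_comp_alternating_sum_eq_zero (s + 1) _ _
    fun a b hab _ => delta_comp_delta A η M s hab
end
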